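/- Let Ψ, Φ̃ ∈ ℝ^{M×N}, let Φ̃ = U Σ Vᵀ be an SVD of Φ̃ with singular values σ₁ ≥ ... ≥ σ_N, and let Z be the M×n matrix of the first n left singular vectors. Then ‖(I − Z Zᵀ)Ψ‖_F ≤ ‖Ψ − Φ̃‖_F + (Σ_{j=n+1}^{N} σ_j²)^{1/2}. -/

import Mathlib

open Matrix

/-! With `P = 1 - Z Zᵀ`, split `P Ψ = P (Ψ - Φ̃) + P Φ̃`. The first term is no larger than
`Ψ - Φ̃` because `‖P A‖² = ‖A‖² - ‖Zᵀ A‖²`. For the second, `Z = U S` with `S` the selection of the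
first `n` columns, so `P Φ̃ = U ((1 - S Sᵀ) Σ) Vᵀ`, and `(1 - S Sᵀ) Σ` is `Σ` with its first `n`
singular values set to zero; `U` and `Vᵀ` preserve the Frobenius norm. -/

noncomputable def frobNorm {m n : Type*} [Fintype m] [Fintype n]
    (A : Matrix m n ℝ) : ℝ :=
  Real.sqrt (∑ i, ∑ j, (A i j) ^ 2)

section FrobNorm

variable {m n k : Type*} [Fintype m] [Fintype n] [Fintype k]

lemma trace_transpose_mul_self_eq_sum_sq (A : Matrix m n ℝ) :
    (Aᵀ * A).trace = ∑ i, ∑ j, A i j ^ 2 := by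
  rw [Finset.sum_comm]
  simp [trace, mul_apply, sq]

lemma frobNorm_sq (A : Matrix m n ℝ) : frobNorm A ^ 2 = (Aᵀ * A).trace := by
  rw [frobNorm, trace_transpose_mul_self_eq_sum_sq, Real.sq_sqrt (by positivity)]

lemma frobNorm_eq_sqrt_trace (A : Matrix m n ℝ) : frobNorm A = √(Aᵀ * A).trace := by
  rw [frobNorm, trace_transpose_mul_self_eq_sum_sq]

lemma frobNorm_nonneg (A : Matrix m n ℝ) : 0 ≤ frobNorm A :=
  Real.sqrt_nonneg _

lemma frobNorm_transpose (A : Matrix m n ℝ) : frobNorm Aᵀ = frobNorm A := by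
  rw [frobNorm, frobNorm, Finset.sum_comm]
  rfl

lemma frobNorm_diagonal [DecidableEq n] (d : n → ℝ) :
    frobNorm (diagonal d) = √(∑ i, d i ^ 2) := by
  simp [frobNorm, diagonal_apply, ite_pow]

section

attribute [local instance] Matrix.frobeniusNormedAddCommGroup

lemma frobNorm_eq_norm (A : Matrix m n ℝ) : frobNorm A = ‖A‖ := by
  rw [frobenius_norm_def, frobNorm, Real.sqrt_eq_rpow]
  simp [Real.norm_eq_abs, sq_abs]

lemma frobNorm_add_le (A B : Matrix m n ℝ) : frobNorm (A + B) ≤ frobNorm A + frobNorm B := by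
  simpa only [frobNorm_eq_norm] using norm_add_le A B

end

lemma frobNorm_mul_of_transpose_mul_self_eq_one [DecidableEq n] {U : Matrix m n ℝ}
    (hU : Uᵀ * U = 1) (A : Matrix n k ℝ) : frobNorm (U * A) = frobNorm A := by
  rw [frobNorm_eq_sqrt_trace, frobNorm_eq_sqrt_trace, transpose_mul, Matrix.mul_assoc,
    ← Matrix.mul_assoc Uᵀ, hU, Matrix.one_mul]

lemma frobNorm_mul_transpose_of_transpose_mul_self_eq_one [DecidableEq k] {V : Matrix n k ℝ}
    (hV : Vᵀ * V = 1) (A : Matrix m k ℝ) : frobNorm (A * Vᵀ) = frobNorm A := by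
  rw [← frobNorm_transpose, transpose_mul, transpose_transpose,
    frobNorm_mul_of_transpose_mul_self_eq_one hV, frobNorm_transpose]

end FrobNorm

section Projection

variable {m n k : Type*} [Fintype m] [Fintype k] [DecidableEq m] [DecidableEq k]

lemma transpose_mul_self_one_sub_mul_transpose_mul {Z : Matrix m k ℝ} (hZ : Zᵀ * Z = 1)
    (A : Matrix m n ℝ) :
    ((1 - Z * Zᵀ) * A)ᵀ * ((1 - Z * Zᵀ) * A) = Aᵀ * A - (Zᵀ * A)ᵀ * (Zᵀ * A) := by
  have hZA : Aᵀ * Z * (Zᵀ * Z) * Zᵀ * A = (Zᵀ * A)ᵀ * (Zᵀ * A) := by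
    rw [hZ, Matrix.mul_one, transpose_mul, transpose_transpose, Matrix.mul_assoc,
      Matrix.mul_assoc]
  simp only [Matrix.sub_mul, Matrix.one_mul, transpose_sub, transpose_mul, transpose_transpose,
    Matrix.mul_sub] at hZA ⊢
  simp only [Matrix.mul_assoc] at hZA ⊢
  rw [← hZA]
  abel

lemma sq_frobNorm_one_sub_mul_transpose_mul [Fintype n] {Z : Matrix m k ℝ} (hZ : Zᵀ * Z = 1)
    (A : Matrix m n ℝ) :
    frobNorm ((1 - Z * Zᵀ) * A) ^ 2 = frobNorm A ^ 2 - frobNorm (Zᵀ * A) ^ 2 := by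
  rw [frobNorm_sq, frobNorm_sq, frobNorm_sq, transpose_mul_self_one_sub_mul_transpose_mul hZ,
    trace_sub]

lemma frobNorm_one_sub_mul_transpose_mul_le [Fintype n] {Z : Matrix m k ℝ} (hZ : Zᵀ * Z = 1)
    (A : Matrix m n ℝ) : frobNorm ((1 - Z * Zᵀ) * A) ≤ frobNorm A := by
  refine (pow_le_pow_iff_left₀ (frobNorm_nonneg _) (frobNorm_nonneg _) two_ne_zero).mp ?_
  rw [sq_frobNorm_one_sub_mul_transpose_mul hZ]
  linarith [sq_nonneg (frobNorm (Zᵀ * A))]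

end Projection

section Selection

variable {m N k : Type*} [DecidableEq N] {e : k → N}

lemma transpose_mul_self_one_submatrix [Fintype N] [DecidableEq k] (he : Function.Injective e) :
    ((1 : Matrix N N ℝ).submatrix id e)ᵀ * (1 : Matrix N N ℝ).submatrix id e = 1 := by
  rw [transpose_submatrix, transpose_one, ← submatrix_mul _ _ _ id _ Function.bijective_id,
    Matrix.one_mul, submatrix_one e he]

lemma one_submatrix_mul_transpose [Fintype k] (he : Function.Injective e) :
    (1 : Matrix N N ℝ).submatrix id e * ((1 : Matrix N N ℝ).submatrix id e)ᵀ
      = diagonal ((Set.range e).indicator 1) := by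
  ext i j
  rw [mul_apply]
  by_cases hi : i ∈ Set.range e
  · obtain ⟨a, rfl⟩ := hi
    rw [Finset.sum_eq_single a (fun b _ hb => by simp [one_apply, he.ne hb.symm]) (by simp)]
    simp [one_apply, diagonal_apply, eq_comm]
  · have hne : ∀ a, i ≠ e a := fun a h => hi ⟨a, h.symm⟩
    simp [one_apply, diagonal_apply, hi, hne]

lemma one_sub_one_submatrix_mul_transpose_mul_diagonal [Fintype N] [Fintype k]
    (he : Function.Injective e) (σ : N → ℝ) :
    (1 - (1 : Matrix N N ℝ).submatrix id e * ((1 : Matrix N N ℝ).submatrix id e)ᵀ) * diagonal σ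
      = diagonal ((Set.range e)ᶜ.indicator σ) := by
  rw [one_submatrix_mul_transpose he, ← diagonal_one, diagonal_sub, diagonal_mul_diagonal]
  congr 1
  ext i
  by_cases hi : i ∈ Set.range e <;> simp [hi]

lemma mul_one_submatrix_id [Fintype N] (U : Matrix m N ℝ) :
    U * (1 : Matrix N N ℝ).submatrix id e = U.submatrix id e :=
  mul_submatrix_one (Equiv.refl N) e U

lemma transpose_mul_self_submatrix_id [Fintype m] [Fintype N] [DecidableEq k]
    {U : Matrix m N ℝ} (hU : Uᵀ * U = 1) (he : Function.Injective e) :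
    (U.submatrix id e)ᵀ * U.submatrix id e = 1 := by
  rw [← mul_one_submatrix_id, transpose_mul, Matrix.mul_assoc, ← Matrix.mul_assoc Uᵀ, hU,
    Matrix.one_mul, transpose_mul_self_one_submatrix he]

end Selection

section TruncatedSVD

variable {m N k : Type*} [Fintype m] [Fintype N] [Fintype k] [DecidableEq m] [DecidableEq N]
  {U : Matrix m N ℝ} {V : Matrix N N ℝ} {e : k → N}

lemma frobNorm_one_sub_mul_transpose_mul_svd (hU : Uᵀ * U = 1) (hV : Vᵀ * V = 1)
    (he : Function.Injective e) (σ : N → ℝ) :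
    frobNorm ((1 - U.submatrix id e * (U.submatrix id e)ᵀ) * (U * diagonal σ * Vᵀ))
      = √(∑ l, (Set.range e)ᶜ.indicator σ l ^ 2) := by
  set S := (1 : Matrix N N ℝ).submatrix id e
  have hproj : (1 - U.submatrix id e * (U.submatrix id e)ᵀ) * (U * diagonal σ * Vᵀ)
      = U * ((1 - S * Sᵀ) * diagonal σ) * Vᵀ := by
    rw [← mul_one_submatrix_id, transpose_mul]
    simp only [Matrix.sub_mul, Matrix.mul_sub, Matrix.one_mul, Matrix.mul_assoc]
    rw [← Matrix.mul_assoc Uᵀ U, hU, Matrix.one_mul]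
  rw [hproj, frobNorm_mul_transpose_of_transpose_mul_self_eq_one hV,
    frobNorm_mul_of_transpose_mul_self_eq_one hU,
    one_sub_one_submatrix_mul_transpose_mul_diagonal he, frobNorm_diagonal]

theorem frobNorm_one_sub_mul_transpose_mul_le_add_tail [DecidableEq k] (hU : Uᵀ * U = 1)
    (hV : Vᵀ * V = 1) (he : Function.Injective e) (σ : N → ℝ) (Ψ : Matrix m N ℝ) :
    frobNorm ((1 - U.submatrix id e * (U.submatrix id e)ᵀ) * Ψ)
      ≤ frobNorm (Ψ - U * diagonal σ * Vᵀ) + √(∑ l, (Set.range e)ᶜ.indicator σ l ^ 2) := by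
  set P := 1 - U.submatrix id e * (U.submatrix id e)ᵀ
  calc frobNorm (P * Ψ)
      = frobNorm (P * (Ψ - U * diagonal σ * Vᵀ) + P * (U * diagonal σ * Vᵀ)) := by
        rw [← Matrix.mul_add, sub_add_cancel]
    _ ≤ frobNorm (P * (Ψ - U * diagonal σ * Vᵀ)) + frobNorm (P * (U * diagonal σ * Vᵀ)) :=
        frobNorm_add_le _ _
    _ ≤ frobNorm (Ψ - U * diagonal σ * Vᵀ) + √(∑ l, (Set.range e)ᶜ.indicator σ l ^ 2) := by
        rw [frobNorm_one_sub_mul_transpose_mul_svd hU hV he]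
        gcongr
        exact frobNorm_one_sub_mul_transpose_mul_le (transpose_mul_self_submatrix_id hU he) _

end TruncatedSVD

theorem frobNorm_projection_le_approx_add_tail_general
    {M N n : ℕ} (hn : n ≤ N)
    (Ψ Φt : Matrix (Fin M) (Fin N) ℝ)
    (U : Matrix (Fin M) (Fin N) ℝ) (V : Matrix (Fin N) (Fin N) ℝ)
    (σ : Fin N → ℝ)
    (hU : Uᵀ * U = 1) (hV : Vᵀ * V = 1)
    (hSVD : Φt = U * Matrix.diagonal σ * Vᵀ)
    (Z : Matrix (Fin M) (Fin n) ℝ)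
    (hZ : Z = Matrix.of fun i (j : Fin n) => U i (Fin.castLE hn j)) :
    frobNorm ((1 - Z * Zᵀ) * Ψ)
      ≤ frobNorm (Ψ - Φt)
        + Real.sqrt (∑ j ∈ Finset.univ.filter (fun j : Fin N => n ≤ (j : ℕ)), (σ j) ^ 2) := by
  have hZ : Z = U.submatrix id (Fin.castLE hn) := hZ
  have htail : ∑ l, (Set.range (Fin.castLE hn))ᶜ.indicator σ l ^ 2
      = ∑ j ∈ Finset.univ.filter (fun j : Fin N => n ≤ (j : ℕ)), σ j ^ 2 := by
    rw [Finset.sum_filter]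
    refine Finset.sum_congr rfl fun l _ => ?_
    by_cases hl : n ≤ (l : ℕ) <;> simp [Fin.range_castLE, hl]
  subst hZ hSVD
  rw [← htail]
  exact frobNorm_one_sub_mul_transpose_mul_le_add_tail hU hV (Fin.castLE_injective hn) σ Ψ

/-- Let `Ψ, Φ̃ ∈ ℝ^{M×N}`, let `Φ̃ = U Σ Vᵀ` be an SVD with singular values
`σ₁ ≥ ... ≥ σ_N ≥ 0`, and let `Z` consist of the first `n` left singular vectors.
Then `‖(I − Z Zᵀ)Ψ‖_F ≤ ‖Ψ − Φ̃‖_F + (Σ_{j>n} σ_j²)^{1/2}`. -/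
theorem frobNorm_projection_le_approx_add_tail
    {M N n : ℕ} (hn : n ≤ N)
    (Ψ Φt : Matrix (Fin M) (Fin N) ℝ)
    (U : Matrix (Fin M) (Fin N) ℝ) (V : Matrix (Fin N) (Fin N) ℝ)
    (σ : Fin N → ℝ)
    (hU : Uᵀ * U = 1) (hV : Vᵀ * V = 1)
    (hσpos : ∀ j, 0 ≤ σ j) (hσmono : Antitone σ)
    (hSVD : Φt = U * Matrix.diagonal σ * Vᵀ)
    (Z : Matrix (Fin M) (Fin n) ℝ)
    (hZ : Z = Matrix.of fun i (j : Fin n) => U i (Fin.castLE hn j)) :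
    frobNorm ((1 - Z * Zᵀ) * Ψ)
      ≤ frobNorm (Ψ - Φt)
        + Real.sqrt (∑ j ∈ Finset.univ.filter (fun j : Fin N => n ≤ (j : ℕ)), (σ j) ^ 2) :=
  frobNorm_projection_le_approx_add_tail_general hn Ψ Φt U V σ hU hV hSVD Z hZ
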